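/- arXiv:1012.0947 — 3 statements merged into one kernel-verified Lean document; each statement's English description precedes it below -/
import Mathlib

section
/- Let B₂(x₁, x₂) = (2/9)(x₁² + 3x₂)^{3/2} + (2/9)x₁³ on {x₁ ≥ 0, x₂ > 0}. Then the Hessian entries are A = ∂²B₂/∂x₁² = 2(√(x₁²+3x₂) + x₁)²/(3√(x₁²+3x₂)), B = ∂²B₂/∂x₁∂x₂ = x₁/√(x₁²+3x₂), C = ∂²B₂/∂x₂² = 3/(2√(x₁²+3x₂)), and √(AC) - |B| = 1. -/
/-!
Both first partials of `B₂` are elementary: `∂₁B₂ = (2/3) x₁ √q + (2/3) x₁²` and `∂₂B₂ = √q`,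
where `q = x₁² + 3x₂`. Differentiating once more, with `s = √q`, gives
`A = 2(s + x₁)²/(3s)`, `B = x₁/s`, `C = 3/(2s)`, so `AC = ((s + x₁)/s)²` and
`√(AC) - |B| = (s + x₁)/s - x₁/s = 1`.
-/

open Real

noncomputable def bellman₂ (a b : ℝ) : ℝ :=
  (2 / 9) * (a ^ 2 + 3 * b) ^ ((3 : ℝ) / 2) + (2 / 9) * a ^ 3

theorem HasDerivAt.rpow_three_halves {f : ℝ → ℝ} {f' x : ℝ} (hf : HasDerivAt f f' x) :
    HasDerivAt (fun y => f y ^ ((3 : ℝ) / 2)) (3 / 2 * √(f x) * f') x := by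
  refine (hf.rpow_const (p := 3 / 2) (Or.inr (by norm_num))).congr_deriv ?_
  rw [sqrt_eq_rpow]
  norm_num
  ring

theorem hasDerivAt_bellman₂_fst (a b : ℝ) :
    HasDerivAt (fun a' => bellman₂ a' b) (2 / 3 * a * √(a ^ 2 + 3 * b) + 2 / 3 * a ^ 2) a := by
  have hq : HasDerivAt (fun a' : ℝ => a' ^ 2 + 3 * b) (2 * a) a := by
    simpa using (hasDerivAt_pow 2 a).add_const (3 * b)
  refine ((hq.rpow_three_halves.const_mul (2 / 9)).add
    ((hasDerivAt_pow 3 a).const_mul (2 / 9))).congr_deriv ?_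
  push_cast
  ring

theorem hasDerivAt_bellman₂_snd (a b : ℝ) :
    HasDerivAt (bellman₂ a) √(a ^ 2 + 3 * b) b := by
  have hq : HasDerivAt (fun b' : ℝ => a ^ 2 + 3 * b') 3 b := by
    simpa using ((hasDerivAt_id b).const_mul 3).const_add (a ^ 2)
  refine ((hq.rpow_three_halves.const_mul (2 / 9)).add_const (2 / 9 * a ^ 3)).congr_deriv ?_
  ring

theorem hasDerivAt_sqrt_fst {a b : ℝ} (hq : 0 < a ^ 2 + 3 * b) :
    HasDerivAt (fun a' => √(a' ^ 2 + 3 * b)) (a / √(a ^ 2 + 3 * b)) a := by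
  have hq' : HasDerivAt (fun a' : ℝ => a' ^ 2 + 3 * b) (2 * a) a := by
    simpa using (hasDerivAt_pow 2 a).add_const (3 * b)
  refine (hq'.sqrt hq.ne').congr_deriv ?_
  field_simp

theorem hasDerivAt_sqrt_snd {a b : ℝ} (hq : 0 < a ^ 2 + 3 * b) :
    HasDerivAt (fun b' => √(a ^ 2 + 3 * b')) (3 / (2 * √(a ^ 2 + 3 * b))) b := by
  have hq' : HasDerivAt (fun b' : ℝ => a ^ 2 + 3 * b') 3 b := by
    simpa using ((hasDerivAt_id b).const_mul 3).const_add (a ^ 2)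
  exact hq'.sqrt hq.ne'

theorem deriv_deriv_bellman₂_fst_fst {a b : ℝ} (hq : 0 < a ^ 2 + 3 * b) :
    deriv (fun a => deriv (fun a' => bellman₂ a' b) a) a =
      2 * (√(a ^ 2 + 3 * b) + a) ^ 2 / (3 * √(a ^ 2 + 3 * b)) := by
  have hs : 0 < √(a ^ 2 + 3 * b) := sqrt_pos.2 hq
  simp_rw [fun a => (hasDerivAt_bellman₂_fst a b).deriv]
  have hid : HasDerivAt (fun a' : ℝ => 2 / 3 * a') (2 / 3) a := by
    simpa using (hasDerivAt_id a).const_mul (2 / 3 : ℝ)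
  have h : HasDerivAt (fun a' => 2 / 3 * a' * √(a' ^ 2 + 3 * b) + 2 / 3 * a' ^ 2) _ a :=
    (hid.mul (hasDerivAt_sqrt_fst hq)).add ((hasDerivAt_pow 2 a).const_mul (2 / 3))
  rw [h.deriv]
  field_simp
  ring

theorem deriv_deriv_bellman₂_snd_fst {a b : ℝ} (hq : 0 < a ^ 2 + 3 * b) :
    deriv (fun b => deriv (fun a' => bellman₂ a' b) a) b = a / √(a ^ 2 + 3 * b) := by
  have hs : 0 < √(a ^ 2 + 3 * b) := sqrt_pos.2 hq
  simp_rw [fun b => (hasDerivAt_bellman₂_fst a b).deriv]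
  rw [(((hasDerivAt_sqrt_snd hq).const_mul (2 / 3 * a)).add_const (2 / 3 * a ^ 2)).deriv]
  field_simp

theorem deriv_deriv_bellman₂_snd_snd {a b : ℝ} (hq : 0 < a ^ 2 + 3 * b) :
    deriv (fun b => deriv (bellman₂ a) b) b = 3 / (2 * √(a ^ 2 + 3 * b)) := by
  simp_rw [fun b => (hasDerivAt_bellman₂_snd a b).deriv]
  exact (hasDerivAt_sqrt_snd hq).deriv

theorem sqrt_mul_sub_abs_eq_one {s x : ℝ} (hs : 0 < s) (hx : 0 ≤ x) :
    √(2 * (s + x) ^ 2 / (3 * s) * (3 / (2 * s))) - |x / s| = 1 := by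
  have hAC : 2 * (s + x) ^ 2 / (3 * s) * (3 / (2 * s)) = ((s + x) / s) ^ 2 := by
    field_simp
  rw [hAC, sqrt_sq (by positivity), abs_of_nonneg (by positivity)]
  field_simp
  ring

/-- Second partial derivatives (Hessian entries) of
`B₂(x₁,x₂) = (2/9)(x₁² + 3x₂)^{3/2} + (2/9)x₁³`, and the fact `√(AC) - |B| = 1`. -/
theorem stmt_5 (x₁ x₂ : ℝ) (hx₁ : 0 ≤ x₁) (hx₂ : 0 < x₂)
    (B₂ : ℝ → ℝ → ℝ)
    (hB₂ : ∀ a b : ℝ, B₂ a b = (2 / 9) * (a ^ 2 + 3 * b) ^ ((3 : ℝ) / 2) + (2 / 9) * a ^ 3)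
    (A B C : ℝ)
    (hA : A = 2 * (Real.sqrt (x₁ ^ 2 + 3 * x₂) + x₁) ^ 2 / (3 * Real.sqrt (x₁ ^ 2 + 3 * x₂)))
    (hB : B = x₁ / Real.sqrt (x₁ ^ 2 + 3 * x₂))
    (hC : C = 3 / (2 * Real.sqrt (x₁ ^ 2 + 3 * x₂))) :
    deriv (fun a => deriv (fun a' => B₂ a' x₂) a) x₁ = A ∧
    deriv (fun b => deriv (fun a => B₂ a b) x₁) x₂ = B ∧
    deriv (fun b => deriv (fun b' => B₂ x₁ b') b) x₂ = C ∧
    Real.sqrt (A * C) - |B| = 1 := by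
  obtain rfl : B₂ = bellman₂ := funext₂ hB₂
  have hq : 0 < x₁ ^ 2 + 3 * x₂ := by positivity
  subst hA hB hC
  exact ⟨deriv_deriv_bellman₂_fst_fst hq, deriv_deriv_bellman₂_snd_fst hq,
    deriv_deriv_bellman₂_snd_snd hq, sqrt_mul_sub_abs_eq_one (sqrt_pos.2 hq) hx₁⟩
end

section
/- For all u, v ≥ 0, B(u,v) = (2/9)((u² + 3v)^{3/2} + u³) ≤ 2(v^{3/2}/(3/2) + u³/3) = (4/3)v^{3/2} + (2/3)u³; equivalently, (u² + 3v)^{3/2} ≤ 2u³ + 6v^{3/2}. -/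
lemma rpow_three_halves_eq (a : ℝ) (ha : 0 ≤ a) :
    a ^ ((3 : ℝ) / 2) = Real.sqrt a ^ 3 := by
  rw [Real.sqrt_eq_rpow, ← Real.rpow_natCast (a ^ ((1:ℝ)/2)) 3,
    ← Real.rpow_mul ha]
  norm_num

lemma key (x u w : ℝ) (hx : 0 ≤ x) (hu : 0 ≤ u) (hw : 0 ≤ w)
    (h : x^2 = u^2 + 3*w^2) : x^3 ≤ 2*u^3 + 6*w^3 := by
  have hq : (u-w)^2 * (u^4+2*u^3*w+6*u*w^3+3*w^4) ≥ 0 := by positivity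
  have hx6 : x^6 = (u^2+3*w^2)^3 := by rw [show x^6 = (x^2)^3 by ring, h]
  have h6 : x^6 ≤ (2*u^3+6*w^3)^2 := by nlinarith
  have hrhs : 0 ≤ 2*u^3+6*w^3 := by positivity
  nlinarith [pow_nonneg hx 3, sq_nonneg (x^3 - (2*u^3+6*w^3)), sq_nonneg (x^3 + (2*u^3+6*w^3))]

/-- Majorization property of the Bellman function:
`B(u,v) = (2/9)((u² + 3v)^{3/2} + u³) ≤ 2(v^{3/2}/(3/2) + u³/3) = (4/3)v^{3/2} + (2/3)u³`. -/
theorem stmt_8 (u v : ℝ) (hu : 0 ≤ u) (hv : 0 ≤ v) :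
    (2 / 9) * ((u ^ 2 + 3 * v) ^ ((3 : ℝ) / 2) + u ^ 3) ≤
      2 * (v ^ ((3 : ℝ) / 2) / (3 / 2) + u ^ 3 / 3) := by
  have ha : (0:ℝ) ≤ u ^ 2 + 3 * v := by positivity
  rw [rpow_three_halves_eq _ ha, rpow_three_halves_eq _ hv]
  set x := Real.sqrt (u ^ 2 + 3 * v) with hxdef
  set w := Real.sqrt v with hwdef
  have hx : 0 ≤ x := Real.sqrt_nonneg _
  have hw : 0 ≤ w := Real.sqrt_nonneg _
  have hw2 : w ^ 2 = v := Real.sq_sqrt hv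
  have hx2 : x ^ 2 = u ^ 2 + 3 * w ^ 2 := by rw [hw2]; exact Real.sq_sqrt ha
  have := key x u w hx hu hw hx2
  linarith
end

section
/- Let 1 < q ≤ 2 ≤ p with 1/p + 1/q = 1, t > 0, u ≥ 0, v > 0 with t = (p^{1/p}/q)t^{1/q}u + (p^{1/q}/p)t^{1/p}v. Set τ = (p·p^{1/p}·t^{1/q})/(q·p^{1/q}·t^{1/p}) and B_v/v = (p^{1/q}t^{1/p} - u)/v. Then B_v/v - 1/τ + 2/τ ≥ p/τ, i.e., B_v/v + 1/τ ≥ p/τ. -/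
/-!
Write `a = p^{1/p}`, `b = p^{1/q}`, `r = t^{1/q}`, `s = t^{1/p}`, so that `a b = p` and `r s = t`.
Multiplied by `p q`, the implicit equation says `τ u + v = a r`, and since `b s τ = (p/q) a r`
with `p/q = p - 1`, this gives the identity
`(b s - u) τ = (p - 1) v + (p - 2) τ u`, whose last term is nonnegative for `p ≥ 2`.
-/

namespace Real.HolderConjugate

variable {p q : ℝ} (hpq : p.HolderConjugate q)
include hpq

lemma rpow_one_div_mul_rpow_one_div {x : ℝ} (hx : 0 ≤ x) : x ^ (1 / p) * x ^ (1 / q) = x := by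
  have hsum : 1 / p + 1 / q = 1 := by rw [hpq.one_div_add_one_div, div_one]
  rw [← Real.rpow_add' hx (by rw [hsum]; exact one_ne_zero), hsum, Real.rpow_one]

variable {a b r s u v τ : ℝ} (hab : a * b = p) (hb : b ≠ 0) (hs : s ≠ 0)
  (himpl : r * s = a / q * r * u + b / p * s * v) (hτ : τ = p * a * r / (q * b * s))
include hab hb hs himpl hτ

lemma mul_eq_mul_add_of_implicit : a * r = τ * u + v := by
  have hcleared : p * q * (r * s) = p * a * r * u + q * b * s * v := by
    rw [himpl]
    field_simp [hpq.ne_zero, hpq.symm.ne_zero]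
  rw [hτ]
  field_simp [hpq.symm.ne_zero]
  linear_combination (q * r * s) * hab + hcleared

lemma sub_mul_eq_of_implicit : (b * s - u) * τ = (p - 1) * v + (p - 2) * (τ * u) := by
  have hbsτ : b * s * τ = (p - 1) * (a * r) := by
    rw [hτ, ← hpq.div_conj_eq_sub_one]
    field_simp [hpq.symm.ne_zero]
  linear_combination hbsτ + (p - 1) * mul_eq_mul_add_of_implicit hpq hab hb hs himpl hτ

end Real.HolderConjugate

theorem stmt_16_general (p q t u v : ℝ) (hp2 : 2 ≤ p)
    (hpq : 1 / p + 1 / q = 1) (ht : 0 < t) (hu : 0 ≤ u) (hv : 0 < v)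
    (himpl : t = (p ^ (1 / p) / q) * t ^ (1 / q) * u + (p ^ (1 / q) / p) * t ^ (1 / p) * v)
    (τ : ℝ) (hτ : τ = (p * p ^ (1 / p) * t ^ (1 / q)) / (q * p ^ (1 / q) * t ^ (1 / p))) :
    p / τ ≤ (p ^ (1 / q) * t ^ (1 / p) - u) / v + 1 / τ := by
  have hconj : p.HolderConjugate q :=
    Real.holderConjugate_iff.2 ⟨by linarith, by simpa only [one_div] using hpq⟩
  have hp := hconj.pos
  have hτ0 : 0 < τ := by rw [hτ]; have := hconj.symm.pos; positivity
  have hidentity := hconj.sub_mul_eq_of_implicit (hconj.rpow_one_div_mul_rpow_one_div hp.le)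
    (Real.rpow_pos_of_pos hp _).ne' (Real.rpow_pos_of_pos ht _).ne'
    (by rwa [hconj.symm.rpow_one_div_mul_rpow_one_div ht.le]) hτ
  have hmain : (p - 1) / τ ≤ (p ^ (1 / q) * t ^ (1 / p) - u) / v := by
    rw [div_le_div_iff₀ hτ0 hv, hidentity]
    linarith [mul_nonneg (sub_nonneg.2 hp2) (mul_nonneg hτ0.le hu)]
  calc p / τ = (p - 1) / τ + 1 / τ := by ring
    _ ≤ _ := by gcongr

/-- Inequality (Bvba): `B_v/v + 1/τ ≥ p/τ` for the implicit Bellman function. -/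
theorem stmt_16 (p q t u v : ℝ) (hq : 1 < q) (hq2 : q ≤ 2) (hp2 : 2 ≤ p)
    (hpq : 1 / p + 1 / q = 1) (ht : 0 < t) (hu : 0 ≤ u) (hv : 0 < v)
    (himpl : t = (p ^ (1 / p) / q) * t ^ (1 / q) * u + (p ^ (1 / q) / p) * t ^ (1 / p) * v)
    (τ : ℝ) (hτ : τ = (p * p ^ (1 / p) * t ^ (1 / q)) / (q * p ^ (1 / q) * t ^ (1 / p))) :
    p / τ ≤ (p ^ (1 / q) * t ^ (1 / p) - u) / v + 1 / τ :=
  stmt_16_general p q t u v hp2 hpq ht hu hv himpl τ hτ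
end
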